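/- arXiv:math/0011045 — 3 statements merged into one kernel-verified Lean document; each statement's English description precedes it below -/
import Mathlib

section
/- Let I be a finitely generated ideal of E_n, let r ≥ 1, and let (f_1, …, f_a) and (g_1, …, g_b) be two finite families of elements of E_n, each of which generates I. Then the ideal of E_n generated by I together with all r×r minors of the Jacobian matrix (∂f_j/∂x_i)_{1≤i≤n,1≤j≤a} is equal to the ideal of E_n generated by I together with all r×r minors of the Jacobian matrix (∂g_j/∂x_i)_{1≤i≤n,1≤j≤b}; i.e., the Jacobian extension Δ_r(I) does not depend on the choice of generators of I. -/
open Filter Topology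
open scoped ContDiff

set_option synthInstance.maxHeartbeats 400000

noncomputable section

/-- The value at `0` of a germ at `𝓝 (0 : ℝⁿ)`. -/
def germValue {n : ℕ} (φ : Filter.Germ (nhds (0 : Fin n → ℝ)) ℝ) : ℝ :=
  Filter.Germ.liftOn φ (fun f => f 0) fun _ _ h => h.eq_of_nhds

@[simp] lemma germValue_coe {n : ℕ} (f : (Fin n → ℝ) → ℝ) :
    germValue (↑f : Filter.Germ (nhds (0 : Fin n → ℝ)) ℝ) = f 0 := rfl

/-- `E_n`: the ring of germs at `0` of smooth real-valued functions on `ℝⁿ`,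
realized as a subring of the ring of all germs at `0`. -/
def En (n : ℕ) : Subring (Filter.Germ (nhds (0 : Fin n → ℝ)) ℝ) where
  carrier := {φ | ∃ f : (Fin n → ℝ) → ℝ, ContDiff ℝ ∞ f ∧ φ = ↑f}
  mul_mem' := by
    rintro a b ⟨f, hf, rfl⟩ ⟨g, hg, rfl⟩
    exact ⟨f * g, hf.mul hg, (Filter.Germ.coe_mul f g).symm⟩
  one_mem' := ⟨1, contDiff_const, rfl⟩
  add_mem' := by
    rintro a b ⟨f, hf, rfl⟩ ⟨g, hg, rfl⟩
    exact ⟨f + g, hf.add hg, (Filter.Germ.coe_add f g).symm⟩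
  zero_mem' := ⟨0, contDiff_const, rfl⟩
  neg_mem' := by
    rintro a ⟨f, hf, rfl⟩
    exact ⟨-f, hf.neg, (Filter.Germ.coe_neg f).symm⟩

lemma mem_En_iff {n : ℕ} {φ : Filter.Germ (nhds (0 : Fin n → ℝ)) ℝ} :
    φ ∈ En n ↔ ∃ f : (Fin n → ℝ) → ℝ, ContDiff ℝ ∞ f ∧ φ = ↑f := Iff.rfl

/-- The germ of a smooth function, as an element of `E_n`. -/
def germOf {n : ℕ} (f : (Fin n → ℝ) → ℝ) (hf : ContDiff ℝ ∞ f) : En n :=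
  ⟨↑f, f, hf, rfl⟩

/-- The inclusion of `ℝ` in `E_n` as constant germs. -/
def constHom (n : ℕ) : ℝ →+* En n where
  toFun c := germOf (fun _ => c) contDiff_const
  map_one' := rfl
  map_mul' a b := by
    apply Subtype.ext
    exact (Filter.Germ.coe_mul _ _).symm
  map_zero' := rfl
  map_add' a b := by
    apply Subtype.ext
    exact (Filter.Germ.coe_add _ _).symm

instance EnAlgebra (n : ℕ) : Algebra ℝ (En n) := (constHom n).toAlgebra

/-- The maximal ideal `m_n` of `E_n`: germs vanishing at the origin. -/
def mId (n : ℕ) : Ideal (En n) where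
  carrier := {φ | germValue (φ : Filter.Germ (nhds (0 : Fin n → ℝ)) ℝ) = 0}
  add_mem' := by
    rintro ⟨a, f, hf, rfl⟩ ⟨b, g, hg, rfl⟩ ha hb
    have : ((⟨↑f, _, hf, rfl⟩ : En n) + ⟨↑g, _, hg, rfl⟩ : En n).1
        = ((↑(f + g) : Filter.Germ (nhds (0 : Fin n → ℝ)) ℝ)) := (Filter.Germ.coe_add f g).symm
    show germValue _ = 0
    rw [this, germValue_coe]
    simpa using by
      have ha' : f 0 = 0 := by simpa using ha
      have hb' : g 0 = 0 := by simpa using hb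
      show f 0 + g 0 = 0
      rw [ha', hb', add_zero]
  zero_mem' := by simp [germValue]; rfl
  smul_mem' := by
    rintro ⟨c, g, hg, rfl⟩ ⟨x, f, hf, rfl⟩ hx
    have hx' : f 0 = 0 := by simpa using hx
    show germValue _ = 0
    have : ((⟨↑g, _, hg, rfl⟩ : En n) * ⟨↑f, _, hf, rfl⟩ : En n).1
        = ((↑(g * f) : Filter.Germ (nhds (0 : Fin n → ℝ)) ℝ)) := (Filter.Germ.coe_mul g f).symm
    rw [smul_eq_mul, this, germValue_coe]
    show g 0 * f 0 = 0
    rw [hx', mul_zero]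

/-- The `i`-th partial derivative of a function on `ℝⁿ`. -/
def pd {n : ℕ} (i : Fin n) (f : (Fin n → ℝ) → ℝ) : (Fin n → ℝ) → ℝ :=
  fun x => fderiv ℝ f x (Pi.single i 1)

/-- The ideal of `E_n` generated by the germs at `0` of a set of functions. -/
def gSpan (n : ℕ) (S : Set ((Fin n → ℝ) → ℝ)) : Ideal (En n) :=
  Ideal.span {φ : En n | ∃ f ∈ S, (φ : Filter.Germ (nhds (0 : Fin n → ℝ)) ℝ) = ↑f}

/-- The Jacobian ideal of (the germ at `0` of) a function `f` on `ℝⁿ`: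
the ideal of `E_n` generated by the germs of the partial derivatives of `f`. -/
def JId (n : ℕ) (f : (Fin n → ℝ) → ℝ) : Ideal (En n) :=
  gSpan n (Set.range fun i : Fin n => pd i f)

instance EnModR (n : ℕ) : Module ℝ (En n) := Algebra.toModule

instance EnTowerSelf (n : ℕ) : IsScalarTower ℝ (En n) (En n) := IsScalarTower.right

instance EnIdealTower (n : ℕ) (I : Ideal (En n)) : IsScalarTower ℝ (En n) ↥I :=
  Submodule.isScalarTower I

instance EnIdealModule (n : ℕ) (I : Ideal (En n)) : Module ℝ ↥I := Submodule.module' I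

instance EnIdealQuotModule (n : ℕ) (I : Ideal (En n)) (N : Submodule (En n) ↥I) :
    Module ℝ (↥I ⧸ N) := Submodule.Quotient.module' N

/-- The dimension (a cardinal) of the real vector space `m_n / J`,
for an ideal `J` of `E_n` (intended: `J ⊆ m_n`). -/
def quotDim (n : ℕ) (J : Ideal (En n)) : Cardinal :=
  Module.rank ℝ (↥(mId n) ⧸ Submodule.comap (mId n).subtype (J : Submodule (En n) (En n)))

/-- The codimension of the germ at `0` of `f : ℝⁿ → ℝ`: `dim_ℝ (m_n / J(f))`. -/
def codim (n : ℕ) (f : (Fin n → ℝ) → ℝ) : Cardinal := quotDim n (JId n f)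

lemma ContDiff.pdSmooth {n : ℕ} {f : (Fin n → ℝ) → ℝ} (hf : ContDiff ℝ ∞ f) (i : Fin n) :
    ContDiff ℝ ∞ (pd i f) :=
  (hf.fderiv_right (by simp)).clm_apply contDiff_const

/-- A chosen smooth representative of an element of `E_n`. -/
def smoothRep {n : ℕ} (φ : En n) : (Fin n → ℝ) → ℝ := (mem_En_iff.1 φ.2).choose

lemma smoothRep_smooth {n : ℕ} (φ : En n) : ContDiff ℝ ∞ (smoothRep φ) :=
  (mem_En_iff.1 φ.2).choose_spec.1

lemma smoothRep_spec {n : ℕ} (φ : En n) :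
    (φ : Filter.Germ (nhds (0 : Fin n → ℝ)) ℝ) = ↑(smoothRep φ) :=
  (mem_En_iff.1 φ.2).choose_spec.2

/-- The `i`-th partial derivative of an element of `E_n` (via a chosen smooth
representative; the resulting germ does not depend on the choice). -/
def pderivE {n : ℕ} (i : Fin n) (φ : En n) : En n :=
  germOf (pd i (smoothRep φ)) ((smoothRep_smooth φ).pdSmooth i)

/-! If `f_j = ∑ₖ c_jk g_k` with every `g_k ∈ I`, the Leibniz rule gives
`∂ᵢ f_j ≡ ∑ₖ c_jk ∂ᵢ g_k (mod I)`: modulo `I` the Jacobian matrix of `f` is that of `g` times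
the matrix `c`. Expanding the determinant multilinearly in the columns, every `r × r` minor of
this product is a combination of `r × r` minors of the Jacobian matrix of `g`. Only the Leibniz
rule enters, so the argument runs for any family of derivations of a commutative ring. -/

open Matrix in
theorem Matrix.det_mul_eq_sum_prod_mul_det_submatrix {m k R : Type*} [Fintype m] [DecidableEq m]
    [Fintype k] [DecidableEq k] [CommRing R] (M : Matrix m k R) (N : Matrix k m R) :
    (M * N).det = ∑ τ : m → k, (∏ j, N (τ j) j) * (M.submatrix id τ).det := by
  have hrows : (M * N)ᵀ = fun j => ∑ l, N l j • Mᵀ l := by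
    ext j i
    simp [Matrix.mul_apply, Finset.sum_apply, mul_comm]
  rw [← det_transpose, hrows]
  change detRowAlternating.toMultilinearMap _ = _
  rw [MultilinearMap.map_sum]
  refine Finset.sum_congr rfl fun τ _ => ?_
  rw [MultilinearMap.map_smul_univ, smul_eq_mul, ← det_transpose]
  rfl

section JacobianMinors

variable {R A ι κ κ' : Type*} [CommRing R] [CommRing A] [Algebra R A]

def jacobianMinors (D : ι → Derivation R A A) (r : ℕ) (f : κ → A) : Ideal A :=
  Ideal.span {φ | ∃ (ρ : Fin r → ι) (σ : Fin r → κ),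
    φ = (Matrix.of fun i j => D (ρ i) (f (σ j))).det}

lemma Derivation.quotient_mk_apply_sum_mul [Fintype κ] (d : Derivation R A A) {I : Ideal A}
    {g : κ → A} (hg : ∀ k, g k ∈ I) (c : κ → A) :
    Ideal.Quotient.mk I (d (∑ k, c k * g k)) =
      ∑ k, Ideal.Quotient.mk I (c k) * Ideal.Quotient.mk I (d (g k)) := by
  simp [Derivation.leibniz, Ideal.Quotient.eq_zero_iff_mem.mpr (hg _)]

lemma jacobianMinors_le_sup [Fintype κ'] (D : ι → Derivation R A A) (r : ℕ) {I : Ideal A}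
    {f : κ → A} {g : κ' → A} (hf : ∀ j, f j ∈ Ideal.span (Set.range g)) (hg : ∀ k, g k ∈ I) :
    jacobianMinors D r f ≤ I ⊔ jacobianMinors D r g := by
  classical
  set K := I ⊔ jacobianMinors D r g
  rw [jacobianMinors, Ideal.span_le]
  rintro _ ⟨ρ, σ, rfl⟩
  choose c hc using fun j => (Submodule.mem_span_range_iff_exists_fun A).mp (hf j)
  have hJ : (Matrix.of fun i j => D (ρ i) (f (σ j))).map (Ideal.Quotient.mk K) =
      (Matrix.of fun i k => Ideal.Quotient.mk K (D (ρ i) (g k))) *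
        Matrix.of fun k j => Ideal.Quotient.mk K (c (σ j) k) := by
    ext i j
    rw [Matrix.map_apply, Matrix.of_apply, ← hc, Matrix.mul_apply]
    simp only [smul_eq_mul, Matrix.of_apply, mul_comm _ (Ideal.Quotient.mk K (c _ _))]
    exact (D (ρ i)).quotient_mk_apply_sum_mul (fun k => le_sup_left (a := I) (hg k)) _
  rw [SetLike.mem_coe, ← Ideal.Quotient.eq_zero_iff_mem, RingHom.map_det,
    RingHom.mapMatrix_apply, hJ, Matrix.det_mul_eq_sum_prod_mul_det_submatrix]
  refine Finset.sum_eq_zero fun τ _ => ?_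
  have hminor : (Matrix.of fun i j => D (ρ i) (g (τ j))).det ∈ K :=
    Ideal.mem_sup_right (Ideal.subset_span ⟨ρ, τ, rfl⟩)
  rw [← Ideal.Quotient.eq_zero_iff_mem, RingHom.map_det] at hminor
  exact mul_eq_zero_of_right _ hminor

theorem sup_jacobianMinors_eq [Fintype κ] [Fintype κ'] (D : ι → Derivation R A A) (r : ℕ)
    {I : Ideal A} {f : κ → A} {g : κ' → A} (hfI : I = Ideal.span (Set.range f))
    (hgI : I = Ideal.span (Set.range g)) :
    I ⊔ jacobianMinors D r f = I ⊔ jacobianMinors D r g := by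
  have hf : ∀ j, f j ∈ I := fun j => hfI ▸ Ideal.subset_span ⟨j, rfl⟩
  have hg : ∀ k, g k ∈ I := fun k => hgI ▸ Ideal.subset_span ⟨k, rfl⟩
  exact le_antisymm (sup_le le_sup_left (jacobianMinors_le_sup D r (hgI ▸ hf) hg))
    (sup_le le_sup_left (jacobianMinors_le_sup D r (hfI ▸ hg) hf))

end JacobianMinors

section PartialDerivatives

variable {n : ℕ}

lemma pd_add {f g : (Fin n → ℝ) → ℝ} (hf : Differentiable ℝ f) (hg : Differentiable ℝ g)
    (i : Fin n) : pd i (f + g) = pd i f + pd i g := by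
  funext x
  simp [pd, fderiv_add (hf x) (hg x)]

lemma pd_mul {f g : (Fin n → ℝ) → ℝ} (hf : Differentiable ℝ f) (hg : Differentiable ℝ g)
    (i : Fin n) : pd i (f * g) = pd i f * g + f * pd i g := by
  funext x
  simp only [pd, fderiv_mul (hf x) (hg x), add_apply,
    smul_apply, smul_eq_mul, Pi.add_apply, Pi.mul_apply]
  ring

lemma pd_const (i : Fin n) (c : ℝ) : pd i (fun _ => c) = 0 := by
  funext x
  simp [pd]

lemma germOf_add {f g : (Fin n → ℝ) → ℝ} (hf : ContDiff ℝ ∞ f) (hg : ContDiff ℝ ∞ g) :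
    germOf f hf + germOf g hg = germOf (f + g) (hf.add hg) := rfl

lemma germOf_mul {f g : (Fin n → ℝ) → ℝ} (hf : ContDiff ℝ ∞ f) (hg : ContDiff ℝ ∞ g) :
    germOf f hf * germOf g hg = germOf (f * g) (hf.mul hg) := rfl

lemma exists_eq_germOf (φ : En n) : ∃ f hf, φ = germOf f hf :=
  ⟨_, smoothRep_smooth φ, Subtype.ext (smoothRep_spec φ)⟩

lemma pderivE_germOf (i : Fin n) {f : (Fin n → ℝ) → ℝ} (hf : ContDiff ℝ ∞ f) :
    pderivE i (germOf f hf) = germOf (pd i f) (hf.pdSmooth i) := by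
  have hrep : smoothRep (germOf f hf) =ᶠ[𝓝 0] f :=
    Filter.Germ.coe_eq.mp (smoothRep_spec (germOf f hf)).symm
  refine Subtype.ext (Filter.Germ.coe_eq.mpr ?_)
  filter_upwards [hrep.fderiv (𝕜 := ℝ)] with x hx
  simp only [pd, hx]

lemma pderivE_add (i : Fin n) (φ ψ : En n) :
    pderivE i (φ + ψ) = pderivE i φ + pderivE i ψ := by
  obtain ⟨f, hf, rfl⟩ := exists_eq_germOf φ
  obtain ⟨g, hg, rfl⟩ := exists_eq_germOf ψ
  simp only [germOf_add, pderivE_germOf, pd_add (hf.differentiable (by simp))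
    (hg.differentiable (by simp))]

lemma pderivE_mul (i : Fin n) (φ ψ : En n) :
    pderivE i (φ * ψ) = pderivE i φ * ψ + φ * pderivE i ψ := by
  obtain ⟨f, hf, rfl⟩ := exists_eq_germOf φ
  obtain ⟨g, hg, rfl⟩ := exists_eq_germOf ψ
  simp only [germOf_mul, germOf_add, pderivE_germOf, pd_mul (hf.differentiable (by simp))
    (hg.differentiable (by simp))]

lemma pderivE_algebraMap (i : Fin n) (c : ℝ) : pderivE i (algebraMap ℝ (En n) c) = 0 := by
  change pderivE i (germOf _ contDiff_const) = 0
  simp only [pderivE_germOf, pd_const]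
  rfl

def pderivDerivation (i : Fin n) : Derivation ℝ (En n) (En n) :=
  Derivation.mk'
    { toFun := pderivE i
      map_add' := pderivE_add i
      map_smul' := fun c φ => by
        simp [Algebra.smul_def, pderivE_mul, pderivE_algebraMap] }
    fun φ ψ => by
      simp only [LinearMap.coe_mk, AddHom.coe_mk, pderivE_mul, smul_eq_mul]
      ring

end PartialDerivatives

theorem statement5_general (n : ℕ) (I : Ideal (En n)) (r : ℕ)
    (a b : ℕ) (f : Fin a → En n) (g : Fin b → En n)
    (hfI : I = Ideal.span (Set.range f)) (hgI : I = Ideal.span (Set.range g)) :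
    I ⊔ Ideal.span {φ : En n | ∃ (ρ : Fin r → Fin n) (σ : Fin r → Fin a),
        φ = (Matrix.of fun i j => pderivE (ρ i) (f (σ j))).det}
      = I ⊔ Ideal.span {φ : En n | ∃ (ρ : Fin r → Fin n) (σ : Fin r → Fin b),
        φ = (Matrix.of fun i j => pderivE (ρ i) (g (σ j))).det} :=
  sup_jacobianMinors_eq pderivDerivation r hfI hgI

/-- The Jacobian extension `Δ_r(I)` of a finitely generated ideal `I` of
`E_n` does not depend on the choice of a finite family of generators: for two generating
families `f` and `g` of `I`, the ideal generated by `I` together with the `r × r` minors of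
the Jacobian matrix of `f` equals the one obtained from `g`. -/
theorem statement5 (n : ℕ) (hn : 1 ≤ n) (I : Ideal (En n)) (r : ℕ) (hr : 1 ≤ r)
    (a b : ℕ) (f : Fin a → En n) (g : Fin b → En n)
    (hfI : I = Ideal.span (Set.range f)) (hgI : I = Ideal.span (Set.range g)) :
    I ⊔ Ideal.span {φ : En n | ∃ (ρ : Fin r → Fin n) (σ : Fin r → Fin a),
        φ = (Matrix.of fun i j => pderivE (ρ i) (f (σ j))).det}
      = I ⊔ Ideal.span {φ : En n | ∃ (ρ : Fin r → Fin n) (σ : Fin r → Fin b),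
        φ = (Matrix.of fun i j => pderivE (ρ i) (g (σ j))).det} :=
  statement5_general n I r a b f g hfI hgI
end
end

section
/- Let f ∈ E_n be a germ with df(0) = 0 and let k ≥ 2 be an integer. Then the codimension of f exceeds k − 2 if and only if dim_ℝ(m_n/(J(f) + m_n^k)) > k − 2 (both dimensions taken in ℕ ∪ {∞}). -/
open Filter Topology
open scoped ContDiff

set_option synthInstance.maxHeartbeats 400000

noncomputable section

/-!
Write `m` for `m_n`. The images of `m ⊇ m² ⊇ ⋯ ⊇ mᵏ⁻¹` in `m / (J(f) + mᵏ)` form a descending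
flag, so if this space has dimension at most `k - 2`, two consecutive members coincide:
`mʲ ⊆ mʲ⁺¹ + J(f)` for some `j < k`. The ideal `m` is finitely generated (Hadamard's lemma:
`f = f(0) + ∑ xᵢ gᵢ` with `gᵢ = ∫₀¹ ∂ᵢf(t x) dt` smooth) and lies in the Jacobson radical
(a germ not vanishing at `0` is invertible), so Nakayama's lemma gives `mʲ ⊆ J(f)`, hence
`J(f) + mᵏ = J(f)`. The converse is the surjection `m / J(f) → m / (J(f) + mᵏ)`.
-/

open MeasureTheory Set

theorem linearIndependent_of_mem_of_notMem_succ {K V : Type*} [DivisionRing K] [AddCommGroup V]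
    [Module K V] :
    ∀ {k : ℕ} (W : ℕ → Submodule K V), Antitone W → ∀ (v : Fin k → V),
      (∀ i : Fin k, v i ∈ W i) → (∀ i : Fin k, v i ∉ W (i + 1)) → LinearIndependent K v
  | 0, _, _, _, _, _ => linearIndependent_empty_type
  | k + 1, W, hW, v, hmem, hnot => by
    rw [← Fin.cons_self_tail v, linearIndependent_finCons]
    refine ⟨linearIndependent_of_mem_of_notMem_succ (fun j => W (j + 1))
      (fun a b hab => hW (by omega)) _ (fun i => hmem i.succ) (fun i => hnot i.succ), ?_⟩
    have hspan : Submodule.span K (range (Fin.tail v)) ≤ W 1 := by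
      rw [Submodule.span_le]
      rintro _ ⟨i, rfl⟩
      exact hW (by simp) (hmem i.succ)
    exact fun h => hnot 0 (hspan h)

namespace Ideal

variable {K R : Type*} [Field K] [CommRing R] [Algebra K R]

theorem natCast_pred_le_rank_quotient_of_not_pow_le {m I : Ideal R} {k : ℕ}
    (h : ∀ j, 0 < j → j < k → ¬ m ^ j ≤ m ^ (j + 1) ⊔ I) :
    ((k - 1 : ℕ) : Cardinal) ≤
      Module.rank K (m ⧸ Submodule.comap m.subtype (I ⊔ m ^ k)) := by
  set N := Submodule.comap m.subtype (I ⊔ m ^ k)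
  have hex : ∀ i : Fin (k - 1), ∃ e ∈ m ^ (i + 1 : ℕ), e ∉ m ^ (i + 2 : ℕ) ⊔ I := fun i =>
    SetLike.not_le_iff_exists.1 (h (i + 1) (by omega) (by omega))
  choose e he hne using hex
  have hem : ∀ i, e i ∈ m := fun i => pow_le_self (by omega) (he i)
  let W : ℕ → Submodule K (m ⧸ N) := fun j =>
    ((Submodule.comap m.subtype (m ^ (j + 1))).map N.mkQ).restrictScalars K
  have hW : Antitone W := fun a b hab =>
    Submodule.restrictScalars_mono _ (Submodule.map_mono (Submodule.comap_mono
      (pow_le_pow_right (by omega))))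
  have hli := linearIndependent_of_mem_of_notMem_succ W hW (fun i => N.mkQ ⟨e i, hem i⟩)
    (fun i => Submodule.mem_map_of_mem (he i)) (fun i hi => hne i ?_)
  · simpa using hli.cardinal_lift_le_rank
  · rw [Submodule.restrictScalars_mem, ← Submodule.mem_comap, Submodule.comap_map_mkQ] at hi
    have hle : N ⊔ Submodule.comap m.subtype (m ^ ((i : ℕ) + 1 + 1)) ≤
        Submodule.comap m.subtype (m ^ (i + 2 : ℕ) ⊔ I) :=
      sup_le (Submodule.comap_mono (sup_le le_sup_right
        (le_sup_of_le_left (pow_le_pow_right (by omega)))))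
        (Submodule.comap_mono le_sup_left)
    exact hle hi

theorem exists_pow_le_pow_succ_sup_of_rank_quotient_add_two_le {m I : Ideal R} {k : ℕ}
    (h : Module.rank K (m ⧸ Submodule.comap m.subtype (I ⊔ m ^ k)) + 2 ≤ k) :
    ∃ j < k, m ^ j ≤ m ^ (j + 1) ⊔ I := by
  by_contra! hcon
  have hle := (add_le_add_left (natCast_pred_le_rank_quotient_of_not_pow_le (K := K)
    fun j _ hj => hcon j hj) 2).trans h
  have hk : ((k - 1 : ℕ) : Cardinal) + 2 = ((k - 1 + 2 : ℕ) : Cardinal) := by norm_cast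
  rw [hk, Nat.cast_le] at hle
  omega

theorem pow_le_of_le_pow_succ_sup {m I : Ideal R} (hfg : m.FG) (hm : m ≤ jacobson ⊥) {j : ℕ}
    (h : m ^ j ≤ m ^ (j + 1) ⊔ I) : m ^ j ≤ I :=
  Submodule.le_of_le_smul_of_le_jacobson_bot hfg.pow hm <| by
    rwa [smul_eq_mul, ← pow_succ', sup_comm]

theorem pow_le_of_rank_quotient_add_two_le {m I : Ideal R} (hfg : m.FG) (hm : m ≤ jacobson ⊥)
    {k : ℕ} (h : Module.rank K (m ⧸ Submodule.comap m.subtype (I ⊔ m ^ k)) + 2 ≤ k) :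
    m ^ k ≤ I := by
  obtain ⟨j, hjk, hj⟩ := exists_pow_le_pow_succ_sup_of_rank_quotient_add_two_le h
  exact (pow_le_pow_right hjk.le).trans (pow_le_of_le_pow_succ_sup hfg hm hj)

theorem rank_quotient_comap_subtype_anti (m : Ideal R) {I I' : Ideal R} (h : I ≤ I') :
    Module.rank K (m ⧸ Submodule.comap m.subtype I') ≤
      Module.rank K (m ⧸ Submodule.comap m.subtype I) := by
  let q : (m ⧸ Submodule.comap m.subtype I) →ₗ[R] m ⧸ Submodule.comap m.subtype I' :=
    Submodule.factor (Submodule.comap_mono h)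
  have hq : Function.Surjective q := Submodule.factor_surjective _
  exact LinearMap.rank_le_of_surjective (q.restrictScalars K) hq

end Ideal

theorem exists_contDiff_eventuallyEq_of_contDiffOn {E F : Type*} [NormedAddCommGroup E]
    [NormedSpace ℝ E] [HasContDiffBump E] [NormedAddCommGroup F] [NormedSpace ℝ F]
    {n : ℕ∞} {f : E → F} {U : Set E} {x : E} (hU : U ∈ 𝓝 x) (hf : ContDiffOn ℝ n f U) :
    ∃ g : E → F, ContDiff ℝ n g ∧ g =ᶠ[𝓝 x] f := by
  obtain ⟨ε, hε, hball⟩ := Metric.mem_nhds_iff.1 (interior_mem_nhds.2 hU)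
  let χ : ContDiffBump x := ⟨ε / 3, ε / 2, by positivity, by linarith⟩
  refine ⟨fun y => χ y • f y, contDiff_iff_contDiffAt.2 fun y => ?_, ?_⟩
  · by_cases hy : y ∈ Metric.ball x ε
    · exact χ.contDiff.contDiffAt.smul
        ((hf.mono interior_subset).contDiffAt (isOpen_interior.mem_nhds (hball hy)))
    · refine contDiffAt_const (c := (0 : F)).congr_of_eventuallyEq ?_
      filter_upwards [Metric.isClosed_closedBall.isOpen_compl.mem_nhds
        (show y ∉ Metric.closedBall x (ε / 2) by
          simp only [Metric.mem_ball, Metric.mem_closedBall, not_lt] at hy ⊢; linarith)]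
        with z hz
      have hz' : ε / 2 < dist z x := by simpa using hz
      simp [χ.zero_of_le_dist hz'.le]
  · filter_upwards [Metric.ball_mem_nhds x (by positivity : (0 : ℝ) < ε / 3)] with y hy
    simp [χ.one_of_mem_closedBall (Metric.ball_subset_closedBall hy)]

theorem contDiff_setIntegral_of_isBounded {E F : Type*} [NormedAddCommGroup E]
    [NormedSpace ℝ E] [NormedAddCommGroup F] [NormedSpace ℝ F] [CompleteSpace F]
    {n : ℕ∞} {g : E → ℝ → F} (hg : ContDiff ℝ n (Function.uncurry g)) {s : Set ℝ}
    (hs : MeasurableSet s) (hsb : Bornology.IsBounded s) :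
    ContDiff ℝ n fun x => ∫ t in s, g x t := by
  -- Cut `g` off by a bump `χ ≡ 1` on `-s`: the integral is then the convolution `𝟙_s ⋆ G x` at `0`.
  obtain ⟨r, hr, hsr⟩ := hsb.subset_closedBall_lt 0 0
  let χ : ContDiffBump (0 : ℝ) := ⟨r, r + 1, hr, by linarith⟩
  let G : E → ℝ → F := fun x u => χ u • g x (-u)
  have hG : ContDiff ℝ n (Function.uncurry G) :=
    (χ.contDiff.comp contDiff_snd).smul (hg.comp (contDiff_fst.prodMk contDiff_snd.neg))
  have hGs : ∀ x u, x ∈ (univ : Set E) → u ∉ Metric.closedBall (0 : ℝ) (r + 1) → G x u = 0 :=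
    fun x u _ hu => by simp [G, χ.zero_of_le_dist (not_le.1 hu).le]
  have hind : LocallyIntegrable (s.indicator (1 : ℝ → ℝ)) volume :=
    (integrable_indicator_iff hs |>.2 (integrableOn_const hsb.measure_lt_top.ne)).locallyIntegrable
  have hconv := contDiffOn_convolution_right_with_param_comp (ContinuousLinearMap.lsmul ℝ ℝ)
    (v := fun _ : E => (0 : ℝ)) contDiffOn_const isOpen_univ (isCompact_closedBall 0 (r + 1))
    hGs hind hG.contDiffOn
  rw [contDiffOn_univ] at hconv
  convert hconv using 2 with x
  rw [convolution, ← integral_indicator hs]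
  congr 1 with t
  by_cases ht : t ∈ s
  · have hχ : χ (-t) = 1 := χ.one_of_mem_closedBall (by simpa using hsr ht)
    simp [G, ht, hχ]
  · simp [ht]

theorem contDiff_intervalIntegral {E F : Type*} [NormedAddCommGroup E]
    [NormedSpace ℝ E] [NormedAddCommGroup F] [NormedSpace ℝ F] [CompleteSpace F]
    {n : ℕ∞} {g : E → ℝ → F} (hg : ContDiff ℝ n (Function.uncurry g)) (a b : ℝ) :
    ContDiff ℝ n fun x => ∫ t in a..b, g x t :=
  (contDiff_setIntegral_of_isBounded hg measurableSet_Ioc (Metric.isBounded_Ioc a b)).sub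
    (contDiff_setIntegral_of_isBounded hg measurableSet_Ioc (Metric.isBounded_Ioc b a))

theorem sub_eq_integral_fderiv_smul {E F : Type*} [NormedAddCommGroup E] [NormedSpace ℝ E]
    [NormedAddCommGroup F] [NormedSpace ℝ F] [CompleteSpace F] {f : E → F}
    (hf : ContDiff ℝ 1 f) (x : E) :
    f x - f 0 = ∫ t in (0 : ℝ)..1, fderiv ℝ f (t • x) x := by
  have hline : ContDiff ℝ 1 fun t : ℝ => f (t • x) := hf.comp (contDiff_id.smul contDiff_const)
  have hderiv : ∀ t : ℝ, deriv (fun t : ℝ => f (t • x)) t = fderiv ℝ f (t • x) x := fun t => by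
    have := ((hf.differentiable one_ne_zero (t • x)).hasFDerivAt.comp_hasDerivAt t
      ((hasDerivAt_id t).smul_const x))
    exact this.deriv.trans (by simp)
  simpa [hderiv] using (intervalIntegral.integral_deriv_of_contDiffOn_Icc hline.contDiffOn
    zero_le_one).symm

theorem fderiv_apply_eq_sum_mul_pd {n : ℕ} (f : (Fin n → ℝ) → ℝ) (x y : Fin n → ℝ) :
    fderiv ℝ f y x = ∑ i, x i * pd i f y := by
  conv_lhs => rw [pi_eq_sum_univ' x, map_sum]
  simp [pd]

theorem eq_add_sum_mul_integral_pd {n : ℕ} {f : (Fin n → ℝ) → ℝ} (hf : ContDiff ℝ 1 f)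
    (x : Fin n → ℝ) :
    f x = f 0 + ∑ i, x i * ∫ t in (0 : ℝ)..1, pd i f (t • x) := by
  have hpd : ∀ i, Continuous (pd i f) := fun i =>
    (hf.continuous_fderiv one_ne_zero).clm_apply continuous_const
  rw [← sub_eq_iff_eq_add', sub_eq_integral_fderiv_smul hf]
  simp_rw [fderiv_apply_eq_sum_mul_pd]
  have hint : ∀ i, IntervalIntegrable (fun t : ℝ => x i * pd i f (t • x)) volume 0 1 :=
    fun i => Continuous.intervalIntegrable
      (continuous_const.mul ((hpd i).comp (continuous_id.smul continuous_const))) _ _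
  rw [intervalIntegral.integral_finsetSum fun i _ => hint i]
  simp_rw [intervalIntegral.integral_const_mul]

namespace En

variable {n : ℕ}

theorem germValue_eq_valueRingHom (φ : Filter.Germ (𝓝 (0 : Fin n → ℝ)) ℝ) :
    germValue φ = Filter.Germ.valueRingHom φ := rfl

theorem coe_germOf_mul (f g : (Fin n → ℝ) → ℝ) (hf : ContDiff ℝ ∞ f) (hg : ContDiff ℝ ∞ g) :
    ((germOf f hf * germOf g hg : En n) : Filter.Germ (𝓝 (0 : Fin n → ℝ)) ℝ) = ↑(f * g) := rfl

theorem isUnit_of_germValue_ne_zero {φ : En n}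
    (h : germValue (φ : Filter.Germ (𝓝 (0 : Fin n → ℝ)) ℝ) ≠ 0) : IsUnit φ := by
  obtain ⟨f, hf, hφ⟩ := φ.2
  rw [hφ, germValue_coe] at h
  have hU : {y | f y ≠ 0} ∈ 𝓝 0 := hf.continuous.isOpen_preimage _ isOpen_ne |>.mem_nhds h
  obtain ⟨g, hg, hgf⟩ := exists_contDiff_eventuallyEq_of_contDiffOn hU
    (hf.contDiffOn.inv fun y hy => hy)
  refine isUnit_iff_exists_inv.2 ⟨germOf g hg, Subtype.ext ?_⟩
  change (φ : Filter.Germ (𝓝 (0 : Fin n → ℝ)) ℝ) * ↑g = 1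
  rw [hφ, ← Filter.Germ.coe_mul, ← Filter.Germ.coe_one, Filter.Germ.coe_eq]
  filter_upwards [hgf, hU] with y hgy hfy
  simp [hgy, mul_inv_cancel₀ hfy]

theorem mId_le_jacobson_bot : mId n ≤ Ideal.jacobson ⊥ := fun x hx =>
  Ideal.mem_jacobson_bot.2 fun y => isUnit_of_germValue_ne_zero <| by
    change germValue ((x : Filter.Germ (𝓝 (0 : Fin n → ℝ)) ℝ) * (y : Filter.Germ _ ℝ) + 1) ≠ 0
    rw [germValue_eq_valueRingHom, map_add, map_mul, map_one, ← germValue_eq_valueRingHom,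
      show germValue _ = 0 from hx]
    norm_num

theorem mId_eq_span_coord :
    mId n = Ideal.span (range fun i : Fin n => germOf (fun x => x i) (contDiff_apply ℝ ℝ i)) := by
  refine le_antisymm (fun φ hφ => ?_) (Ideal.span_le.2 ?_)
  · obtain ⟨f, hf, hφ'⟩ := φ.2
    have hf0 : f 0 = 0 := by rw [← germValue_coe f, ← hφ']; exact hφ
    let h : Fin n → (Fin n → ℝ) → ℝ := fun i x => ∫ t in (0 : ℝ)..1, pd i f (t • x)
    have hh : ∀ i, ContDiff ℝ ∞ (h i) := fun i =>
      contDiff_intervalIntegral (g := fun x t => pd i f (t • x))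
        (((hf.fderiv_right le_rfl).clm_apply contDiff_const).comp
          (contDiff_snd.smul contDiff_fst)) 0 1
    have : φ = ∑ i, germOf (fun x => x i) (contDiff_apply ℝ ℝ i) * germOf (h i) (hh i) := by
      refine Subtype.ext ?_
      simp only [AddSubmonoidClass.coe_finsetSum, coe_germOf_mul, hφ']
      refine (congrArg (Filter.Germ.coeRingHom _) (funext fun x => ?_)).trans (map_sum _ _ _)
      rw [eq_add_sum_mul_integral_pd (hf.of_le (by simp)) x, hf0, zero_add]
      simp [h]
    rw [this]
    exact Ideal.sum_mem _ fun i _ => Ideal.mul_mem_right _ _ (Ideal.subset_span ⟨i, rfl⟩)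
  · rintro _ ⟨i, rfl⟩
    rfl

theorem mId_fg : (mId n).FG := mId_eq_span_coord ▸ Submodule.fg_span (finite_range _)

end En

/-- The inequality `c > k - 2` between dimensions is encoded as `k < c + 2`. -/
theorem statement6_general (n k : ℕ) (f : (Fin n → ℝ) → ℝ) :
    ((k : Cardinal) < codim n f + 2) ↔
      ((k : Cardinal) < quotDim n (JId n f ⊔ (mId n) ^ k) + 2) := by
  have hanti : quotDim n (JId n f ⊔ mId n ^ k) ≤ codim n f :=
    Ideal.rank_quotient_comap_subtype_anti (mId n) le_sup_left
  refine ⟨fun h => ?_, fun h => h.trans_le (add_le_add_left hanti 2)⟩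
  by_contra! hle
  have hpow : mId n ^ k ≤ JId n f :=
    Ideal.pow_le_of_rank_quotient_add_two_le En.mId_fg En.mId_le_jacobson_bot hle
  rw [sup_eq_left.2 hpow] at hle
  exact hle.not_gt h

/-- For a germ `f` with `df(0) = 0` and `k ≥ 2`: the codimension of `f`
exceeds `k - 2` iff `dim_ℝ(m_n/(J(f) + m_nᵏ)) > k - 2`. (An inequality `c > k - 2` of
extended naturals is encoded as `k < c + 2`.) -/
theorem statement6 (n k : ℕ) (hn : 1 ≤ n) (hk : 2 ≤ k)
    (f : (Fin n → ℝ) → ℝ) (hf : ContDiff ℝ ∞ f) (hdf : fderiv ℝ f 0 = 0) :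
    ((k : Cardinal) < codim n f + 2) ↔
      ((k : Cardinal) < quotDim n (JId n f ⊔ (mId n) ^ k) + 2) :=
  statement6_general n k f
end
end

section
/- Let f be a smooth real-valued function defined on an open neighborhood of 0 in ℝⁿ with df(0) = 0 (equivalently, the germ of f − f(0) at 0 lies in m_n²). If the codimension of the germ of f at 0 is finite, i.e., dim_ℝ(m_n/J(f)) < ∞, then 0 is an isolated singularity of f: there exists an open neighborhood U of 0 such that df(x) ≠ 0 for every x ∈ U with x ≠ 0. -/
open Filter Topology
open scoped ContDiff

set_option synthInstance.maxHeartbeats 400000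

noncomputable section

/-!
Every element of the Jacobian ideal vanishes near `0` on the critical set of `f`. If `m_n / J(f)`
is finite dimensional, then for each coordinate `x_i` the classes of `x_i, x_i², x_i³, …` are
linearly dependent, so `q(x_i) ∈ J(f)` for some nonzero polynomial `q`. Hence near `0` every
critical point has all its coordinates among the finitely many roots of these polynomials, and
a finite set containing `0` is isolated from `0`.
-/

open Polynomial

namespace Filter.Germ

def restrictRingHom {α R : Type*} [Semiring R] {l l' : Filter α} (h : l' ≤ l) :
    Germ l R →+* Germ l' R where
  toFun φ := φ.compTendsto id (tendsto_id.mono_left h)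
  map_one' := rfl
  map_mul' φ ψ := φ.inductionOn₂ ψ fun _ _ => rfl
  map_zero' := rfl
  map_add' φ ψ := φ.inductionOn₂ ψ fun _ _ => rfl

@[simp] lemma restrictRingHom_coe {α R : Type*} [Semiring R] {l l' : Filter α} (h : l' ≤ l)
    (g : α → R) : restrictRingHom h (g : Germ l R) = (g : Germ l' R) := rfl

end Filter.Germ

theorem Ideal.exists_ne_zero_mul_aeval_mem {K A : Type*} [Field K] [CommRing A] [Algebra K A]
    {I J : Ideal A} [FiniteDimensional K (I ⧸ Submodule.comap I.subtype (J : Submodule A A))]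
    {a : A} (ha : a ∈ I) : ∃ p : K[X], p ≠ 0 ∧ a * aeval a p ∈ J := by
  let L : K[X] →ₗ[K] I ⧸ Submodule.comap I.subtype (J : Submodule A A) :=
    (Submodule.comap I.subtype (J : Submodule A A)).mkQ.restrictScalars K ∘ₗ
      { toFun := fun p => ⟨a * aeval a p, I.mul_mem_right _ ha⟩
        map_add' := fun p q => by ext; simp [mul_add]
        map_smul' := fun c p => by ext; simp }
  have hL : ¬ Function.Injective L := fun hinj =>
    Polynomial.not_finite (Module.Finite.of_injective L hinj)
  obtain ⟨p, hpL, hp⟩ : ∃ p, L p = 0 ∧ p ≠ 0 := by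
    simpa [injective_iff_map_eq_zero] using hL
  exact ⟨p, hp, by simpa [L] using hpL⟩

-- germs vanishing on `Z` near `0`: those that become zero as germs along `𝓝 0 ⊓ 𝓟 Z`
def vanishingIdeal (n : ℕ) (Z : Set (Fin n → ℝ)) : Ideal (En n) :=
  RingHom.ker ((Germ.restrictRingHom (inf_le_left : 𝓝 0 ⊓ 𝓟 Z ≤ 𝓝 0)).comp (En n).subtype)

lemma mem_vanishingIdeal_iff {n : ℕ} {Z : Set (Fin n → ℝ)} {φ : En n}
    {g : (Fin n → ℝ) → ℝ} (hφ : (φ : Germ (𝓝 (0 : Fin n → ℝ)) ℝ) = g) :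
    φ ∈ vanishingIdeal n Z ↔ ∀ᶠ x in 𝓝 0, x ∈ Z → g x = 0 := by
  rw [vanishingIdeal, RingHom.mem_ker, RingHom.comp_apply, Subring.coe_subtype, hφ,
    Germ.restrictRingHom_coe, ← Germ.coe_zero, Germ.coe_eq, EventuallyEq,
    eventually_inf_principal]
  rfl

lemma JId_le_vanishingIdeal (n : ℕ) (f : (Fin n → ℝ) → ℝ) :
    JId n f ≤ vanishingIdeal n {x | fderiv ℝ f x = 0} := by
  refine Ideal.span_le.mpr ?_
  rintro φ ⟨_, ⟨i, rfl⟩, hφ⟩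
  refine (mem_vanishingIdeal_iff hφ).mpr (Eventually.of_forall fun x hx => ?_)
  simp [pd, show fderiv ℝ f x = 0 from hx]

lemma coe_aeval_germOf {n : ℕ} {g : (Fin n → ℝ) → ℝ} (hg : ContDiff ℝ ∞ g) (p : ℝ[X]) :
    ((aeval (germOf g hg) p : En n) : Germ (𝓝 (0 : Fin n → ℝ)) ℝ) =
      ↑(fun x => p.eval (g x)) := by
  induction p using Polynomial.induction_on' with
  | add p q hp hq =>
    rw [map_add, Subring.coe_add, hp, hq, ← Germ.coe_add]
    simp_rw [eval_add]
    rfl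
  | monomial k c =>
    rw [aeval_monomial, Subring.coe_mul, Subring.coe_pow]
    change ((fun _ => c : (Fin n → ℝ) → ℝ) : Germ (𝓝 (0 : Fin n → ℝ)) ℝ) * (g : Germ _ ℝ) ^ k = _
    rw [← Germ.coe_pow, ← Germ.coe_mul]
    simp_rw [eval_monomial]
    rfl

lemma exists_isRoot_apply_of_fderiv_eq_zero {n : ℕ} {f : (Fin n → ℝ) → ℝ}
    (hfin : codim n f < Cardinal.aleph0) (i : Fin n) :
    ∃ q : ℝ[X], q ≠ 0 ∧ ∀ᶠ x in 𝓝 0, fderiv ℝ f x = 0 → q.IsRoot (x i) := by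
  have : FiniteDimensional ℝ (mId n ⧸ Submodule.comap (mId n).subtype
      (JId n f : Submodule (En n) (En n))) := Module.rank_lt_aleph0_iff.mp hfin
  have hcoord : ContDiff ℝ ∞ fun x : Fin n → ℝ => x i := contDiff_apply ℝ ℝ i
  have hcoord_mem : germOf _ hcoord ∈ mId n := rfl
  obtain ⟨p, hp, hpJ⟩ := Ideal.exists_ne_zero_mul_aeval_mem (K := ℝ) (J := JId n f) hcoord_mem
  refine ⟨X * p, mul_ne_zero X_ne_zero hp, ?_⟩
  have hgerm : ((germOf _ hcoord * aeval (germOf _ hcoord) p : En n) :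
      Germ (𝓝 (0 : Fin n → ℝ)) ℝ) = ↑(fun x : Fin n → ℝ => x i * p.eval (x i)) := by
    rw [Subring.coe_mul, coe_aeval_germOf]
    exact (Germ.coe_mul _ _).symm
  simpa using (mem_vanishingIdeal_iff hgerm).mp (JId_le_vanishingIdeal n f hpJ)

lemma eventually_nhdsNE_notMem_of_isRoot {ι : Type*} [Finite ι] {Z : Set (ι → ℝ)} {a : ι → ℝ}
    (q : ι → ℝ[X]) (hq : ∀ i, q i ≠ 0) (hZ : ∀ i, ∀ᶠ x in 𝓝 a, x ∈ Z → (q i).IsRoot (x i)) :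
    ∀ᶠ x in 𝓝[≠] a, x ∉ Z := by
  set T : Set (ι → ℝ) := Set.univ.pi fun i => {t | (q i).IsRoot t}
  have hT : T.Finite := Set.Finite.pi fun i => finite_setOfPred_isRoot (hq i)
  have hTa : (T \ {a})ᶜ ∈ 𝓝 a := hT.sdiff.isClosed.isOpen_compl.mem_nhds fun h => h.2 rfl
  rw [eventually_nhdsWithin_iff]
  filter_upwards [eventually_all.mpr hZ, hTa] with x hroot hxT hxa hxZ
  exact hxT ⟨fun i _ => hroot i hxZ, hxa⟩

theorem statement9_general (n : ℕ) (W : Set (Fin n → ℝ)) (hW : IsOpen W)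
    (h0W : (0 : Fin n → ℝ) ∈ W) (f : (Fin n → ℝ) → ℝ)
    (hfin : codim n f < Cardinal.aleph0) :
    ∃ U : Set (Fin n → ℝ), IsOpen U ∧ (0 : Fin n → ℝ) ∈ U ∧ U ⊆ W ∧
      ∀ x ∈ U, x ≠ 0 → fderiv ℝ f x ≠ 0 := by
  choose q hq hroot using exists_isRoot_apply_of_fderiv_eq_zero hfin
  have hisolated :=
    eventually_nhdsNE_notMem_of_isRoot (Z := {x | fderiv ℝ f x = 0}) q hq hroot
  obtain ⟨V, hV, hVopen, hV0⟩ := eventually_nhds_iff.mp (eventually_nhdsWithin_iff.mp hisolated)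
  exact ⟨W ∩ V, hW.inter hVopen, ⟨h0W, hV0⟩, Set.inter_subset_left, fun x hx => hV x hx.2⟩

/-- If `f` is smooth on an open neighborhood `W` of `0`, `df(0) = 0`, and
the codimension of the germ of `f` at `0` is finite, then `0` is an isolated singularity of
`f`: there is an open neighborhood `U` of `0` (inside `W`) on which `df(x) ≠ 0` for all
`x ≠ 0`. -/
theorem statement9 (n : ℕ) (hn : 1 ≤ n) (W : Set (Fin n → ℝ)) (hW : IsOpen W)
    (h0W : (0 : Fin n → ℝ) ∈ W) (f : (Fin n → ℝ) → ℝ) (hf : ContDiffOn ℝ ∞ f W)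
    (hdf : fderiv ℝ f 0 = 0) (hfin : codim n f < Cardinal.aleph0) :
    ∃ U : Set (Fin n → ℝ), IsOpen U ∧ (0 : Fin n → ℝ) ∈ U ∧ U ⊆ W ∧
      ∀ x ∈ U, x ≠ 0 → fderiv ℝ f x ≠ 0 :=
  statement9_general n W hW h0W f hfin
end
end
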